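/- Under the hypotheses of the main theorem, let r₁,r₂>0 be such that every solution (z,w) of the auxiliary problem (AP),(PBC) satisfies |z(t)|<r₁ and |w(t)|<r₂ on [0,T]. If f,g satisfy a Nagumo-type condition relative to [α₁⁰(t),β₁⁰(t)] and [α₂⁰(t),β₂⁰(t)] with Nagumo functions φ,ψ such that the shifted functions φ*(s):=φ(s)+2r₁ and ψ*(s):=ψ(s)+2r₂ also satisfy ∫₀^∞ ds/φ*(s)=+∞ and ∫₀^∞ ds/ψ*(s)=+∞, then there exist N₁*,N₂*>0 such that every solution (z,w)∈(C²[0,T])² of (AP),(PBC) verifies |z'(t)|<N₁* and |w'(t)|<N₂* for all t∈[0,T], independently of λ,μ∈[0,1]. -/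

import Mathlib

/-- Sup norm of `α` on `[0,T]`: `‖α‖ = max_{t ∈ [0,T]} |α(t)|`. -/
noncomputable def supNorm (T : ℝ) (α : ℝ → ℝ) : ℝ :=
  sSup ((fun t => |α t|) '' Set.Icc 0 T)

/-- The shift `α⁰ := α − ‖α‖` used for lower solutions. -/
noncomputable def lowShift (T : ℝ) (α : ℝ → ℝ) : ℝ → ℝ :=
  fun t => α t - supNorm T α

/-- The shift `β⁰ := β + ‖β‖` used for upper solutions. -/
noncomputable def upShift (T : ℝ) (β : ℝ → ℝ) : ℝ → ℝ :=
  fun t => β t + supNorm T β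

/-- Periodic boundary conditions on `[0,T]`. -/
def PBC (T : ℝ) (z w : ℝ → ℝ) : Prop :=
  z 0 = z T ∧ deriv z 0 = deriv z T ∧ w 0 = w T ∧ deriv w 0 = deriv w T

/-- `(α₁, α₂)` is a lower solution of the periodic problem. -/
noncomputable def IsLowerSolution (T : ℝ) (f g : ℝ → ℝ → ℝ → ℝ → ℝ → ℝ)
    (α₁ α₂ : ℝ → ℝ) : Prop :=
  ContDiff ℝ 2 α₁ ∧ ContDiff ℝ 2 α₂ ∧
  (∀ t ∈ Set.Icc 0 T, ∀ w₁ : ℝ,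
    f t (lowShift T α₁ t) (lowShift T α₂ t) (deriv α₁ t) w₁ ≤ deriv (deriv α₁) t) ∧
  (∀ t ∈ Set.Icc 0 T, ∀ z₁ : ℝ,
    g t (lowShift T α₁ t) (lowShift T α₂ t) z₁ (deriv α₂ t) ≤ deriv (deriv α₂) t) ∧
  α₁ 0 = α₁ T ∧ α₂ 0 = α₂ T ∧
  deriv α₁ T ≤ deriv α₁ 0 ∧ deriv α₂ T ≤ deriv α₂ 0

/-- `(β₁, β₂)` is an upper solution of the periodic problem. -/
noncomputable def IsUpperSolution (T : ℝ) (f g : ℝ → ℝ → ℝ → ℝ → ℝ → ℝ)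
    (β₁ β₂ : ℝ → ℝ) : Prop :=
  ContDiff ℝ 2 β₁ ∧ ContDiff ℝ 2 β₂ ∧
  (∀ t ∈ Set.Icc 0 T, ∀ w₁ : ℝ,
    deriv (deriv β₁) t ≤ f t (upShift T β₁ t) (upShift T β₂ t) (deriv β₁ t) w₁) ∧
  (∀ t ∈ Set.Icc 0 T, ∀ z₁ : ℝ,
    deriv (deriv β₂) t ≤ g t (upShift T β₁ t) (upShift T β₂ t) z₁ (deriv β₂ t)) ∧
  β₁ 0 = β₁ T ∧ β₂ 0 = β₂ T ∧
  deriv β₁ 0 ≤ deriv β₁ T ∧ deriv β₂ 0 ≤ deriv β₂ T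

/-- The Nagumo-type condition for `f, g` relative to the intervals
`[γ₁(t), Γ₁(t)]` and `[γ₂(t), Γ₂(t)]`, with Nagumo functions `φ, ψ`. -/
def NagumoCondition (T : ℝ) (f g : ℝ → ℝ → ℝ → ℝ → ℝ → ℝ)
    (γ₁ Γ₁ γ₂ Γ₂ : ℝ → ℝ) (φ ψ : ℝ → ℝ) : Prop :=
  ContinuousOn φ (Set.Ici 0) ∧ ContinuousOn ψ (Set.Ici 0) ∧
  (∀ s ∈ Set.Ici (0:ℝ), 0 < φ s) ∧ (∀ s ∈ Set.Ici (0:ℝ), 0 < ψ s) ∧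
  (∫⁻ s in Set.Ici (0:ℝ), ENNReal.ofReal (1 / φ s)) = ⊤ ∧
  (∫⁻ s in Set.Ici (0:ℝ), ENNReal.ofReal (1 / ψ s)) = ⊤ ∧
  (∀ t ∈ Set.Icc 0 T, ∀ z₀ w₀ z₁ w₁ : ℝ,
    γ₁ t ≤ z₀ → z₀ ≤ Γ₁ t → γ₂ t ≤ w₀ → w₀ ≤ Γ₂ t →
    |f t z₀ w₀ z₁ w₁| ≤ φ |z₁| ∧ |g t z₀ w₀ z₁ w₁| ≤ ψ |w₁|)

/-- The truncation operator `δ` associated with lower bound `lo` and upper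
bound `hi`. -/
noncomputable def trunc (lo hi : ℝ → ℝ) (t x : ℝ) : ℝ :=
  if hi t < x then hi t else if x < lo t then lo t else x

/-- `(z,w)` is a solution of the truncated, perturbed, homotopic auxiliary
problem (AP) with parameters `lam, mu`, associated with lower solutions
`(α₁, α₂)` and upper solutions `(β₁, β₂)`. -/
noncomputable def IsAPSolution (T : ℝ) (f g : ℝ → ℝ → ℝ → ℝ → ℝ → ℝ)
    (α₁ α₂ β₁ β₂ : ℝ → ℝ) (lam mu : ℝ) (z w : ℝ → ℝ) : Prop :=
  ContDiff ℝ 2 z ∧ ContDiff ℝ 2 w ∧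
  (∀ t ∈ Set.Icc 0 T,
    deriv (deriv z) t - z t =
      lam * f t (trunc (lowShift T α₁) (upShift T β₁) t (z t))
                (trunc (lowShift T α₂) (upShift T β₂) t (w t))
                (deriv z t) (deriv w t)
        - lam * trunc (lowShift T α₁) (upShift T β₁) t (z t)) ∧
  (∀ t ∈ Set.Icc 0 T,
    deriv (deriv w) t - w t =
      mu * g t (trunc (lowShift T α₁) (upShift T β₁) t (z t))
               (trunc (lowShift T α₂) (upShift T β₂) t (w t))
               (deriv z t) (deriv w t)
        - mu * trunc (lowShift T α₂) (upShift T β₂) t (w t))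


open MeasureTheory intervalIntegral in
/-- Core Nagumo estimate: if `|u'| ≤ Φ(u)` on `[a,b]`, then
`G(u b) ≤ G(u a) + (b-a)` where `G x = ∫₀ˣ ds/Φ(s)`. -/
lemma nagumo_core (Φ : ℝ → ℝ) (hΦ : Continuous Φ) (hpos : ∀ s, 0 < Φ s)
    (a b : ℝ) (hab : a ≤ b) (u u' : ℝ → ℝ)
    (hu : ∀ t ∈ Set.Icc a b, HasDerivAt u (u' t) t)
    (hbound : ∀ t ∈ Set.Icc a b, |u' t| ≤ Φ (u t)) :
    (∫ s in (0:ℝ)..(u b), 1 / Φ s) ≤ (∫ s in (0:ℝ)..(u a), 1 / Φ s) + (b - a) := by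
  have hcont : Continuous fun s => 1 / Φ s :=
    continuous_const.div hΦ fun s => (hpos s).ne'
  set G : ℝ → ℝ := fun x => ∫ s in (0:ℝ)..x, 1 / Φ s with hGdef
  have hG : ∀ x : ℝ, HasDerivAt G (1 / Φ x) x := by
    intro x
    exact intervalIntegral.integral_hasDerivAt_right (hcont.intervalIntegrable 0 x)
      (hcont.stronglyMeasurableAtFilter _ _) hcont.continuousAt
  set H : ℝ → ℝ := fun t => G (u t) - (t - a) with hHdef
  have hH : ∀ t ∈ Set.Icc a b, HasDerivAt H (1 / Φ (u t) * u' t - 1) t := by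
    intro t ht
    have h1 : HasDerivAt (fun t => G (u t)) (1 / Φ (u t) * u' t) t :=
      (hG (u t)).comp t (hu t ht)
    have h2 : HasDerivAt (fun t : ℝ => t - a) 1 t := (hasDerivAt_id t).sub_const a
    exact h1.sub h2
  have hanti : AntitoneOn H (Set.Icc a b) := by
    apply antitoneOn_of_deriv_nonpos (convex_Icc a b)
    · intro t ht
      exact (hH t ht).continuousAt.continuousWithinAt
    · intro t ht
      rw [interior_Icc] at ht
      exact (hH t (Set.Ioo_subset_Icc_self ht)).differentiableAt.differentiableWithinAt
    · intro t ht
      rw [interior_Icc] at ht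
      rw [(hH t (Set.Ioo_subset_Icc_self ht)).deriv]
      have h1 := hbound t (Set.Ioo_subset_Icc_self ht)
      have h2 := hpos (u t)
      have h3 : u' t ≤ Φ (u t) := le_trans (le_abs_self _) h1
      have h4 : (1 / Φ (u t)) * u' t ≤ (1 / Φ (u t)) * Φ (u t) :=
        mul_le_mul_of_nonneg_left h3 (by positivity)
      rw [one_div_mul_cancel h2.ne'] at h4
      linarith
  have hfin := hanti (Set.left_mem_Icc.mpr hab) (Set.right_mem_Icc.mpr hab) hab
  simp only [hHdef, sub_self, sub_zero] at hfin
  linarith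

open MeasureTheory in
/-- One-case Nagumo contradiction. -/
lemma nagumo_case (Φ : ℝ → ℝ) (hΦ : Continuous Φ) (hpos : ∀ s, 0 < Φ s)
    (a b : ℝ) (hab : a ≤ b) (u u' : ℝ → ℝ)
    (hu : ∀ t ∈ Set.Icc a b, HasDerivAt u (u' t) t)
    (hbound : ∀ t ∈ Set.Icc a b, |u' t| ≤ Φ (u t))
    (ha : u a = 0) (N T : ℝ) (hub : N ≤ u b) (hba : b - a ≤ T)
    (hN : T < ∫ s in (0:ℝ)..N, 1 / Φ s) : False := by
  have hcont : Continuous fun s => 1 / Φ s :=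
    continuous_const.div hΦ fun s => (hpos s).ne'
  have hcore := nagumo_core Φ hΦ hpos a b hab u u' hu hbound
  rw [ha, intervalIntegral.integral_same] at hcore
  have h1 : (∫ s in (0:ℝ)..N, 1 / Φ s) + ∫ s in N..(u b), 1 / Φ s
      = ∫ s in (0:ℝ)..(u b), 1 / Φ s :=
    intervalIntegral.integral_add_adjacent_intervals
      (hcont.intervalIntegrable _ _) (hcont.intervalIntegrable _ _)
  have h2 : 0 ≤ ∫ s in N..(u b), 1 / Φ s :=
    intervalIntegral.integral_nonneg hub (fun s _ => by have := hpos s; positivity)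
  linarith

open MeasureTheory in
/-- Both orders, fixed sign. -/
lemma nagumo_ord (Φ : ℝ → ℝ) (hΦ : Continuous Φ) (hpos : ∀ s, 0 < Φ s) (T : ℝ)
    (u u' : ℝ → ℝ) (hu : ∀ t ∈ Set.Icc 0 T, HasDerivAt u (u' t) t)
    (hbound : ∀ t ∈ Set.Icc 0 T, |u' t| ≤ Φ (u t))
    (t₀ t₁ : ℝ) (ht₀ : t₀ ∈ Set.Icc 0 T) (ht₁ : t₁ ∈ Set.Icc 0 T)
    (h0 : u t₀ = 0) (N : ℝ) (hub : N ≤ u t₁)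
    (hN : T < ∫ s in (0:ℝ)..N, 1 / Φ s) : False := by
  obtain ⟨ht₀0, ht₀T⟩ := ht₀
  obtain ⟨ht₁0, ht₁T⟩ := ht₁
  rcases le_total t₀ t₁ with hord | hord
  · refine nagumo_case Φ hΦ hpos t₀ t₁ hord u u'
      (fun t ht => hu t ⟨le_trans ht₀0 ht.1, le_trans ht.2 ht₁T⟩)
      (fun t ht => hbound t ⟨le_trans ht₀0 ht.1, le_trans ht.2 ht₁T⟩)
      h0 N T hub (by linarith) hN
  · refine nagumo_case Φ hΦ hpos (-t₀) (-t₁) (by linarith)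
      (fun t => u (-t)) (fun t => -u' (-t)) ?_ ?_ (by simpa using h0) N T
      (by simpa using hub) (by linarith) hN
    · intro t ht
      have hmem : -t ∈ Set.Icc 0 T := ⟨by linarith [ht.2], by linarith [ht.1]⟩
      have := (hu (-t) hmem).comp t (hasDerivAt_neg t)
      exact this.congr_deriv (by ring)
    · intro t ht
      have hmem : -t ∈ Set.Icc 0 T := ⟨by linarith [ht.2], by linarith [ht.1]⟩
      simpa [abs_neg] using hbound (-t) hmem

open MeasureTheory in
/-- Nagumo a priori derivative bound on `[0,T]` for a periodic C² function. -/
lemma deriv_bound (T : ℝ) (hT : 0 < T) (Φ : ℝ → ℝ) (hΦ : Continuous Φ)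
    (hpos : ∀ s, 0 < Φ s) (heven : ∀ s, Φ (-s) = Φ s)
    (u : ℝ → ℝ) (hu : ContDiff ℝ 2 u) (hbc : u 0 = u T)
    (hbound : ∀ t ∈ Set.Icc 0 T, |deriv (deriv u) t| ≤ Φ (deriv u t))
    (N : ℝ) (hN : T < ∫ s in (0:ℝ)..N, 1 / Φ s) :
    ∀ t ∈ Set.Icc 0 T, |deriv u t| < N := by
  have hu1 : ContDiff ℝ 1 (deriv u) := by
    have : ContDiff ℝ (1 + 1) u := by norm_num; exact hu
    exact (contDiff_succ_iff_deriv.mp this).2.2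
  have hD : ∀ t : ℝ, HasDerivAt (deriv u) (deriv (deriv u) t) t := fun t =>
    ((hu1.differentiable one_ne_zero) t).hasDerivAt
  obtain ⟨t₀, ht₀, h0⟩ := exists_deriv_eq_zero hT (hu.continuous.continuousOn) hbc
  have ht₀' : t₀ ∈ Set.Icc 0 T := Set.Ioo_subset_Icc_self ht₀
  intro t₁ ht₁
  by_contra hcon
  push_neg at hcon
  rcases le_abs.mp hcon with h | h
  · exact nagumo_ord Φ hΦ hpos T (deriv u) (deriv (deriv u))
      (fun t _ => hD t) hbound t₀ t₁ ht₀' ht₁ h0 N h hN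
  · refine nagumo_ord Φ hΦ hpos T (fun t => -deriv u t) (fun t => -deriv (deriv u) t)
      (fun t _ => (hD t).neg) ?_ t₀ t₁ ht₀' ht₁ (by simp [h0]) N h hN
    intro t ht
    rw [abs_neg, heven]
    exact hbound t ht

open MeasureTheory in
/-- Extraction of a suitable `N` from divergence of `∫ ds/(φ(s)+2r)`. -/
lemma exists_N (T r : ℝ) (hT : 0 < T) (hr : 0 < r) (φ : ℝ → ℝ)
    (hφc : ContinuousOn φ (Set.Ici 0)) (hφpos : ∀ s ∈ Set.Ici (0:ℝ), 0 < φ s)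
    (hstar : (∫⁻ s in Set.Ici (0:ℝ), ENNReal.ofReal (1 / (φ s + 2 * r))) = ⊤) :
    ∃ N : ℝ, 0 < N ∧ T < ∫ s in (0:ℝ)..N, 1 / (φ |s| + 2 * r) := by
  set Φ : ℝ → ℝ := fun s => φ |s| + 2 * r with hΦdef
  have hΦc : Continuous Φ := by
    have h1 : Continuous fun s : ℝ => φ |s| :=
      hφc.comp_continuous continuous_abs (fun x => abs_nonneg x)
    exact h1.add continuous_const
  have hΦpos : ∀ s, 0 < Φ s := fun s => by
    have := hφpos |s| (abs_nonneg s); simp only [hΦdef]; linarith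
  have hcont1 : Continuous fun s => 1 / Φ s :=
    continuous_const.div hΦc fun s => (hΦpos s).ne'
  have hmeas : Measurable fun s => ENNReal.ofReal (1 / Φ s) :=
    ENNReal.measurable_ofReal.comp hcont1.measurable
  have htop : (∫⁻ s in Set.Ici (0:ℝ), ENNReal.ofReal (1 / Φ s)) = ⊤ := by
    rw [← hstar]
    apply setLIntegral_congr_fun measurableSet_Ici ?_
    intro s hs
    simp only [hΦdef, abs_of_nonneg (Set.mem_Ici.mp hs : (0:ℝ) ≤ s)]
  have hsup : (⨆ n : ℕ, ∫⁻ s in Set.Icc (0:ℝ) n, ENNReal.ofReal (1 / Φ s)) = ⊤ := by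
    have hind : ∀ x : ℝ,
        (⨆ n : ℕ, (Set.Icc (0:ℝ) n).indicator (fun s => ENNReal.ofReal (1 / Φ s)) x)
          = (Set.Ici (0:ℝ)).indicator (fun s => ENNReal.ofReal (1 / Φ s)) x := by
      intro x
      by_cases hx : (0:ℝ) ≤ x
      · obtain ⟨n, hn⟩ := exists_nat_ge x
        rw [Set.indicator_of_mem (Set.mem_Ici.mpr hx)]
        apply le_antisymm
        · exact iSup_le fun m => Set.indicator_le_self' (fun _ _ => zero_le) x
        · have : (Set.Icc (0:ℝ) n).indicator (fun s => ENNReal.ofReal (1 / Φ s)) x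
              = ENNReal.ofReal (1 / Φ x) := Set.indicator_of_mem (Set.mem_Icc.mpr ⟨hx, hn⟩) _
          rw [← this]
          exact le_iSup (fun m : ℕ => (Set.Icc (0:ℝ) m).indicator
            (fun s => ENNReal.ofReal (1 / Φ s)) x) n
      · have h1 : ∀ n : ℕ, x ∉ Set.Icc (0:ℝ) n := fun n hmem => hx hmem.1
        have h2 : x ∉ Set.Ici (0:ℝ) := hx
        simp [Set.indicator_of_notMem, h1, h2]
    have hmono : Monotone (fun n : ℕ =>
        (Set.Icc (0:ℝ) n).indicator (fun s => ENNReal.ofReal (1 / Φ s))) := by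
      intro m n hmn
      apply Set.indicator_le_indicator_of_subset
      · exact Set.Icc_subset_Icc_right (by exact_mod_cast hmn)
      · exact fun _ => zero_le
    calc (⨆ n : ℕ, ∫⁻ s in Set.Icc (0:ℝ) n, ENNReal.ofReal (1 / Φ s))
        = ⨆ n : ℕ, ∫⁻ s, (Set.Icc (0:ℝ) n).indicator
            (fun s => ENNReal.ofReal (1 / Φ s)) s := by
          refine iSup_congr fun n => ?_
          rw [lintegral_indicator measurableSet_Icc]
      _ = ∫⁻ s, ⨆ n : ℕ, (Set.Icc (0:ℝ) n).indicator
            (fun s => ENNReal.ofReal (1 / Φ s)) s := by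
          rw [lintegral_iSup (fun n => hmeas.indicator measurableSet_Icc) hmono]
      _ = ∫⁻ s, (Set.Ici (0:ℝ)).indicator (fun s => ENNReal.ofReal (1 / Φ s)) s := by
          exact lintegral_congr hind
      _ = ∫⁻ s in Set.Ici (0:ℝ), ENNReal.ofReal (1 / Φ s) := by
          rw [lintegral_indicator measurableSet_Ici]
      _ = ⊤ := htop
  obtain ⟨n, hn⟩ : ∃ n : ℕ,
      ENNReal.ofReal T < ∫⁻ s in Set.Icc (0:ℝ) n, ENNReal.ofReal (1 / Φ s) := by
    by_contra hc
    push_neg at hc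
    have h1 : (⨆ n : ℕ, ∫⁻ s in Set.Icc (0:ℝ) n, ENNReal.ofReal (1 / Φ s))
        ≤ ENNReal.ofReal T := iSup_le hc
    rw [hsup, top_le_iff] at h1
    exact ENNReal.ofReal_ne_top h1
  have hInt : IntegrableOn (fun s => 1 / Φ s) (Set.Icc (0:ℝ) n) :=
    hcont1.integrableOn_Icc
  have heq : (∫⁻ s in Set.Icc (0:ℝ) n, ENNReal.ofReal (1 / Φ s))
      = ENNReal.ofReal (∫ s in Set.Icc (0:ℝ) n, 1 / Φ s) :=
    (ofReal_integral_eq_lintegral_ofReal hInt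
      (Filter.Eventually.of_forall fun s => by have := hΦpos s; positivity)).symm
  rw [heq] at hn
  have hTlt : T < ∫ s in Set.Icc (0:ℝ) n, 1 / Φ s :=
    (ENNReal.ofReal_lt_ofReal_iff_of_nonneg hT.le).mp hn
  have hn0 : 0 < (n : ℝ) := by
    rcases Nat.eq_zero_or_pos n with h | h
    · exfalso
      subst h
      rw [Nat.cast_zero, integral_Icc_eq_integral_Ioc, Set.Ioc_self,
        Measure.restrict_empty, integral_zero_measure] at hTlt
      linarith
    · exact_mod_cast h
  refine ⟨(n : ℝ), hn0, ?_⟩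
  rw [intervalIntegral.integral_of_le hn0.le, ← integral_Icc_eq_integral_Ioc]
  exact hTlt

lemma lowShift_nonpos (T : ℝ) (α : ℝ → ℝ) (hα : Continuous α)
    {t : ℝ} (ht : t ∈ Set.Icc 0 T) : lowShift T α t ≤ 0 := by
  have hbdd : BddAbove ((fun t => |α t|) '' Set.Icc 0 T) :=
    (isCompact_Icc.image (continuous_abs.comp hα)).bddAbove
  have h1 : |α t| ≤ supNorm T α := le_csSup hbdd ⟨t, ht, rfl⟩
  have h2 : α t ≤ |α t| := le_abs_self _
  simp only [lowShift]
  linarith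

lemma upShift_nonneg (T : ℝ) (β : ℝ → ℝ) (hβ : Continuous β)
    {t : ℝ} (ht : t ∈ Set.Icc 0 T) : 0 ≤ upShift T β t := by
  have hbdd : BddAbove ((fun t => |β t|) '' Set.Icc 0 T) :=
    (isCompact_Icc.image (continuous_abs.comp hβ)).bddAbove
  have h1 : |β t| ≤ supNorm T β := le_csSup hbdd ⟨t, ht, rfl⟩
  have h2 : -β t ≤ |β t| := neg_le_abs _
  simp only [upShift]
  linarith

lemma trunc_mem (lo hi : ℝ → ℝ) (t x : ℝ) (hlo : lo t ≤ 0) (hhi : 0 ≤ hi t) :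
    lo t ≤ trunc lo hi t x ∧ trunc lo hi t x ≤ hi t ∧ |trunc lo hi t x| ≤ |x| := by
  have h1 := le_abs_self x
  have h2 := neg_abs_le x
  unfold trunc
  split_ifs with hx1 hx2
  · exact ⟨by linarith, le_rfl, abs_le.mpr ⟨by linarith, by linarith⟩⟩
  · exact ⟨le_rfl, by linarith, abs_le.mpr ⟨by linarith, by linarith⟩⟩
  · exact ⟨by linarith, by linarith, le_rfl⟩

/-- Claim 2: under the hypotheses of the main theorem, given bounds `r₁, r₂`
for all solutions of the auxiliary problem (AP), and since the shifted Nagumo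
functions `φ + 2r₁`, `ψ + 2r₂` still have divergent integrals, there exist
a priori bounds `N₁*, N₂*` for the first derivatives of every solution of
(AP),(PBC), independently of `λ, μ ∈ [0,1]`. -/
theorem stmt_4
    (T : ℝ) (hT : 0 < T)
    (f g : ℝ → ℝ → ℝ → ℝ → ℝ → ℝ)
    (hf : ContinuousOn (fun p : ℝ × ℝ × ℝ × ℝ × ℝ =>
      f p.1 p.2.1 p.2.2.1 p.2.2.2.1 p.2.2.2.2)
      (Set.Icc 0 T ×ˢ (Set.univ : Set (ℝ × ℝ × ℝ × ℝ))))
    (hg : ContinuousOn (fun p : ℝ × ℝ × ℝ × ℝ × ℝ =>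
      g p.1 p.2.1 p.2.2.1 p.2.2.2.1 p.2.2.2.2)
      (Set.Icc 0 T ×ˢ (Set.univ : Set (ℝ × ℝ × ℝ × ℝ))))
    (α₁ α₂ β₁ β₂ : ℝ → ℝ)
    (hlow : IsLowerSolution T f g α₁ α₂)
    (hupp : IsUpperSolution T f g β₁ β₂)
    (φ ψ : ℝ → ℝ)
    (hNag : NagumoCondition T f g (lowShift T α₁) (upShift T β₁)
      (lowShift T α₂) (upShift T β₂) φ ψ)
    (hfmono : ∀ t ∈ Set.Icc 0 T, ∀ z₀ z₁ w₁ : ℝ,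
      min (sInf (deriv α₁ '' Set.Icc 0 T)) (sInf (deriv β₁ '' Set.Icc 0 T)) ≤ z₁ →
      z₁ ≤ max (sSup (deriv α₁ '' Set.Icc 0 T)) (sSup (deriv β₁ '' Set.Icc 0 T)) →
      ∀ w₀ w₀' : ℝ, w₀ ≤ w₀' → f t z₀ w₀' z₁ w₁ ≤ f t z₀ w₀ z₁ w₁)
    (hgmono : ∀ t ∈ Set.Icc 0 T, ∀ w₀ z₁ w₁ : ℝ,
      min (sInf (deriv α₂ '' Set.Icc 0 T)) (sInf (deriv β₂ '' Set.Icc 0 T)) ≤ w₁ →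
      w₁ ≤ max (sSup (deriv α₂ '' Set.Icc 0 T)) (sSup (deriv β₂ '' Set.Icc 0 T)) →
      ∀ z₀ z₀' : ℝ, z₀ ≤ z₀' → g t z₀' w₀ z₁ w₁ ≤ g t z₀ w₀ z₁ w₁)
    (r₁ r₂ : ℝ) (hr₁ : 0 < r₁) (hr₂ : 0 < r₂)
    (hloc : ∀ lam ∈ Set.Icc (0:ℝ) 1, ∀ mu ∈ Set.Icc (0:ℝ) 1, ∀ z w : ℝ → ℝ,
      IsAPSolution T f g α₁ α₂ β₁ β₂ lam mu z w → PBC T z w →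
      ∀ t ∈ Set.Icc 0 T, |z t| < r₁ ∧ |w t| < r₂)
    (hφstar : (∫⁻ s in Set.Ici (0:ℝ), ENNReal.ofReal (1 / (φ s + 2 * r₁))) = ⊤)
    (hψstar : (∫⁻ s in Set.Ici (0:ℝ), ENNReal.ofReal (1 / (ψ s + 2 * r₂))) = ⊤) :
    ∃ N₁ N₂ : ℝ, 0 < N₁ ∧ 0 < N₂ ∧
      ∀ lam ∈ Set.Icc (0:ℝ) 1, ∀ mu ∈ Set.Icc (0:ℝ) 1, ∀ z w : ℝ → ℝ,
        IsAPSolution T f g α₁ α₂ β₁ β₂ lam mu z w → PBC T z w →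
        ∀ t ∈ Set.Icc 0 T, |deriv z t| < N₁ ∧ |deriv w t| < N₂ := by
  obtain ⟨hφc, hψc, hφpos, hψpos, -, -, hbd⟩ := hNag
  obtain ⟨N₁, hN₁pos, hN₁⟩ := exists_N T r₁ hT hr₁ φ hφc hφpos hφstar
  obtain ⟨N₂, hN₂pos, hN₂⟩ := exists_N T r₂ hT hr₂ ψ hψc hψpos hψstar
  -- the shifted Nagumo functions
  set Φ₁ : ℝ → ℝ := fun s => φ |s| + 2 * r₁ with hΦ₁def
  set Φ₂ : ℝ → ℝ := fun s => ψ |s| + 2 * r₂ with hΦ₂def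
  have hΦ₁c : Continuous Φ₁ := by
    have h1 : Continuous fun s : ℝ => φ |s| :=
      hφc.comp_continuous continuous_abs (fun x => abs_nonneg x)
    exact h1.add continuous_const
  have hΦ₂c : Continuous Φ₂ := by
    have h1 : Continuous fun s : ℝ => ψ |s| :=
      hψc.comp_continuous continuous_abs (fun x => abs_nonneg x)
    exact h1.add continuous_const
  have hΦ₁pos : ∀ s, 0 < Φ₁ s := fun s => by
    have := hφpos |s| (abs_nonneg s); simp only [hΦ₁def]; linarith
  have hΦ₂pos : ∀ s, 0 < Φ₂ s := fun s => by
    have := hψpos |s| (abs_nonneg s); simp only [hΦ₂def]; linarith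
  have hΦ₁even : ∀ s, Φ₁ (-s) = Φ₁ s := fun s => by simp [hΦ₁def]
  have hΦ₂even : ∀ s, Φ₂ (-s) = Φ₂ s := fun s => by simp [hΦ₂def]
  refine ⟨N₁, N₂, hN₁pos, hN₂pos, ?_⟩
  intro lam hlam mu hmu z w hAP hPBC
  obtain ⟨hz2, hw2, heqz, heqw⟩ := hAP
  -- sign properties of the shifted bounds
  have hα₁ : ∀ t ∈ Set.Icc 0 T, lowShift T α₁ t ≤ 0 :=
    fun t ht => lowShift_nonpos T α₁ hlow.1.continuous ht
  have hα₂ : ∀ t ∈ Set.Icc 0 T, lowShift T α₂ t ≤ 0 :=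
    fun t ht => lowShift_nonpos T α₂ hlow.2.1.continuous ht
  have hβ₁ : ∀ t ∈ Set.Icc 0 T, 0 ≤ upShift T β₁ t :=
    fun t ht => upShift_nonneg T β₁ hupp.1.continuous ht
  have hβ₂ : ∀ t ∈ Set.Icc 0 T, 0 ≤ upShift T β₂ t :=
    fun t ht => upShift_nonneg T β₂ hupp.2.1.continuous ht
  -- pointwise bounds on the second derivatives
  have hkey : ∀ t ∈ Set.Icc 0 T,
      |deriv (deriv z) t| ≤ Φ₁ (deriv z t) ∧ |deriv (deriv w) t| ≤ Φ₂ (deriv w t) := by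
    intro t ht
    obtain ⟨hzr, hwr⟩ := hloc lam hlam mu hmu z w ⟨hz2, hw2, heqz, heqw⟩ hPBC t ht
    set A := trunc (lowShift T α₁) (upShift T β₁) t (z t) with hA
    set B := trunc (lowShift T α₂) (upShift T β₂) t (w t) with hB
    obtain ⟨hA1, hA2, hA3⟩ := trunc_mem _ _ t (z t) (hα₁ t ht) (hβ₁ t ht)
    obtain ⟨hB1, hB2, hB3⟩ := trunc_mem _ _ t (w t) (hα₂ t ht) (hβ₂ t ht)
    obtain ⟨hFf, hGg⟩ := hbd t ht A B (deriv z t) (deriv w t) hA1 hA2 hB1 hB2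
    set F := f t A B (deriv z t) (deriv w t) with hF
    set G := g t A B (deriv z t) (deriv w t) with hG
    have heqz' : deriv (deriv z) t = z t + (lam * F - lam * A) := by
      have := heqz t ht; rw [← hA, ← hB, ← hF] at this; linarith
    have heqw' : deriv (deriv w) t = w t + (mu * G - mu * B) := by
      have := heqw t ht; rw [← hA, ← hB, ← hG] at this; linarith
    constructor
    · have h1 : |deriv (deriv z) t| ≤ |z t| + (|lam * F| + |lam * A|) := by
        rw [heqz']
        calc |z t + (lam * F - lam * A)| ≤ |z t| + |lam * F - lam * A| := abs_add_le _ _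
          _ ≤ |z t| + (|lam * F| + |lam * A|) := by
              have := abs_sub (lam * F) (lam * A); linarith
      have h2 : |lam * F| ≤ |F| := by
        rw [abs_mul, abs_of_nonneg hlam.1]
        exact mul_le_of_le_one_left (abs_nonneg _) hlam.2
      have h3 : |lam * A| ≤ |A| := by
        rw [abs_mul, abs_of_nonneg hlam.1]
        exact mul_le_of_le_one_left (abs_nonneg _) hlam.2
      have h4 : |A| ≤ |z t| := hA3
      simp only [hΦ₁def]
      linarith [hFf]
    · have h1 : |deriv (deriv w) t| ≤ |w t| + (|mu * G| + |mu * B|) := by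
        rw [heqw']
        calc |w t + (mu * G - mu * B)| ≤ |w t| + |mu * G - mu * B| := abs_add_le _ _
          _ ≤ |w t| + (|mu * G| + |mu * B|) := by
              have := abs_sub (mu * G) (mu * B); linarith
      have h2 : |mu * G| ≤ |G| := by
        rw [abs_mul, abs_of_nonneg hmu.1]
        exact mul_le_of_le_one_left (abs_nonneg _) hmu.2
      have h3 : |mu * B| ≤ |B| := by
        rw [abs_mul, abs_of_nonneg hmu.1]
        exact mul_le_of_le_one_left (abs_nonneg _) hmu.2
      have h4 : |B| ≤ |w t| := hB3
      simp only [hΦ₂def]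
      linarith [hGg]
  intro t ht
  constructor
  · exact deriv_bound T hT Φ₁ hΦ₁c hΦ₁pos hΦ₁even z hz2 hPBC.1
      (fun t ht => (hkey t ht).1) N₁ hN₁ t ht
  · exact deriv_bound T hT Φ₂ hΦ₂c hΦ₂pos hΦ₂even w hw2 hPBC.2.2.1
      (fun t ht => (hkey t ht).2) N₂ hN₂ t ht
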